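/- arXiv:2006.12476 — 2 statements merged into one kernel-verified Lean document; each statement's English description precedes it below -/
import Mathlib

section
/- For every 0 < c < 1/2 there exist constants a, b > 0 (depending only on c) such that for all sufficiently large d there is a set S of matrices in ℝ^{2×d}, each of whose two rows is a unit vector, with |S| ≥ 2^{a·d^c}, such that for every pair of distinct matrices A, B ∈ S one has ‖A Bᵀ‖₂ ≤ b · d^{c − 1/2}. -/
open MeasureTheory ProbabilityTheory Real Finset

/-- Spectral (operator) norm of a square real matrix. -/
noncomputable def spec {n : ℕ} (M : Matrix (Fin n) (Fin n) ℝ) : ℝ :=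
  ‖Matrix.toEuclideanCLM (𝕜 := ℝ) M‖

/-!
Reed–Solomon construction. For a prime `p` with `p² ≤ d < 4p²`, embed `𝔽_p × 𝔽_p` into
`{0, …, d-1}`. The graph of a polynomial of degree `≤ k` over `𝔽_p` has `p` points, and the
graphs of two distinct such polynomials meet in at most `k` points, since their difference has at
most `k` roots. The normalised indicator vectors `v_f` of these `p^(k+1)` graphs are therefore unit
vectors with `⟨v_f, v_g⟩ ≤ k / p`. The `2 × d` matrix `A_f` with both rows `v_f` satisfies
`A_f A_gᵀ = ⟨v_f, v_g⟩ J`, whose spectral norm is `2 ⟨v_f, v_g⟩ ≤ 2k / p`. With `k = ⌊p^(2c)⌋`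
this gives at least `2^(k+1) ≥ 2^(d^c / 2)` matrices and the bound `2k / p ≤ 4 d^(c - 1/2)`.
-/

open Matrix Polynomial

theorem toEuclideanCLM_vecMulVec {n : Type*} [Fintype n] [DecidableEq n] (x y : n → ℝ) :
    toEuclideanCLM (𝕜 := ℝ) (vecMulVec x y)
      = InnerProductSpace.rankOne ℝ (WithLp.toLp 2 x) (WithLp.toLp 2 y) := by
  apply ContinuousLinearMap.coe_injective
  rw [coe_toEuclideanCLM_eq_toEuclideanLin, ← LinearEquiv.eq_symm_apply,
    InnerProductSpace.symm_toEuclideanLin_rankOne]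
  simp

theorem spec_vecMulVec {n : ℕ} (x y : Fin n → ℝ) :
    spec (vecMulVec x y) = ‖WithLp.toLp 2 x‖ * ‖WithLp.toLp 2 y‖ := by
  rw [spec, toEuclideanCLM_vecMulVec, InnerProductSpace.norm_rankOne]

theorem spec_replicateRow_mul_transpose {ι : Type*} [Fintype ι] (n : ℕ) (v w : ι → ℝ) :
    spec (replicateRow (Fin n) v * (replicateRow (Fin n) w)ᵀ) = n * |v ⬝ᵥ w| := by
  have : replicateRow (Fin n) v * (replicateRow (Fin n) w)ᵀ
      = vecMulVec (fun _ => v ⬝ᵥ w) (fun _ => 1) := by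
    ext i j; simp [vecMulVec_apply]
  rw [this, spec_vecMulVec, EuclideanSpace.norm_eq, EuclideanSpace.norm_eq]
  simp only [Real.norm_eq_abs, sq_abs, sum_const, card_univ, Fintype.card_fin, nsmul_eq_mul,
    one_pow, mul_one]
  rw [sqrt_mul (Nat.cast_nonneg _), sqrt_sq_eq_abs, mul_right_comm,
    mul_self_sqrt (Nat.cast_nonneg _)]

section NormalizedIndicator

variable {ι : Type*} [DecidableEq ι]

noncomputable def normalizedIndicator (T : Finset ι) : ι → ℝ :=
  fun i => if i ∈ T then (√(#T : ℝ))⁻¹ else 0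

theorem normalizedIndicator_ne_zero_iff {T : Finset ι} {i : ι} :
    normalizedIndicator T i ≠ 0 ↔ i ∈ T := by
  by_cases hi : i ∈ T
  · have : (0 : ℝ) < #T := by exact_mod_cast card_pos.2 ⟨i, hi⟩
    simp [normalizedIndicator, hi, this.ne']
  · simp [normalizedIndicator, hi]

theorem normalizedIndicator_injective :
    Function.Injective (normalizedIndicator : Finset ι → ι → ℝ) := by
  intro T U h
  ext i
  rw [← normalizedIndicator_ne_zero_iff, h, normalizedIndicator_ne_zero_iff]

theorem normalizedIndicator_dotProduct [Fintype ι] (T U : Finset ι) :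
    normalizedIndicator T ⬝ᵥ normalizedIndicator U = #(T ∩ U) / (√(#T : ℝ) * √(#U : ℝ)) := by
  have hterm : ∀ i, normalizedIndicator T i * normalizedIndicator U i
      = if i ∈ T ∩ U then (√(#T : ℝ) * √(#U : ℝ))⁻¹ else 0 := by
    intro i
    by_cases hT : i ∈ T <;> by_cases hU : i ∈ U <;> simp [normalizedIndicator, hT, hU, mul_comm]
  simp only [dotProduct, hterm, sum_ite_mem, univ_inter, sum_const, nsmul_eq_mul, div_eq_mul_inv]

theorem normalizedIndicator_dotProduct_self [Fintype ι] {T : Finset ι} (hT : T.Nonempty) :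
    normalizedIndicator T ⬝ᵥ normalizedIndicator T = 1 := by
  have : (0 : ℝ) < #T := by exact_mod_cast hT.card_pos
  rw [normalizedIndicator_dotProduct, inter_self, mul_self_sqrt this.le, div_self this.ne']

end NormalizedIndicator

theorem exists_nearly_orthogonal_family_of_finsets {ι κ : Type*} [Fintype ι] [DecidableEq ι]
    [Fintype κ] (T : κ → Finset ι) {n k : ℕ} (hkn : k < n) (hcard : ∀ a, #(T a) = n)
    (hinter : ∀ a b, a ≠ b → #(T a ∩ T b) ≤ k) :
    ∃ S : Finset (Matrix (Fin 2) ι ℝ), #S = Fintype.card κ ∧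
      (∀ A ∈ S, ∀ r, ∑ j, A r j ^ 2 = 1) ∧
      ∀ A ∈ S, ∀ B ∈ S, A ≠ B → spec (A * Bᵀ) ≤ 2 * k / n := by
  classical
  have hT : Function.Injective T := by
    intro a b hab
    by_contra hne
    have := hinter a b hne
    rw [hab, inter_self, hcard] at this
    omega
  set A : κ → Matrix (Fin 2) ι ℝ := fun a => replicateRow (Fin 2) (normalizedIndicator (T a))
  have hA : Function.Injective A :=
    replicateRow_injective.comp (normalizedIndicator_injective.comp hT)
  have hne : ∀ a, (T a).Nonempty := fun a => card_pos.1 (by rw [hcard]; omega)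
  refine ⟨univ.image A, by rw [card_image_of_injective _ hA, card_univ], ?_, ?_⟩
  · rintro _ hM r
    obtain ⟨a, -, rfl⟩ := mem_image.1 hM
    simpa [A, dotProduct, sq] using normalizedIndicator_dotProduct_self (hne a)
  · rintro _ hM _ hN hMN
    obtain ⟨a, -, rfl⟩ := mem_image.1 hM
    obtain ⟨b, -, rfl⟩ := mem_image.1 hN
    have hab : a ≠ b := fun h => hMN (h ▸ rfl)
    have hn : (0 : ℝ) < n := by exact_mod_cast (show 0 < n by omega)
    rw [spec_replicateRow_mul_transpose, normalizedIndicator_dotProduct, hcard, hcard,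
      mul_self_sqrt hn.le, abs_of_nonneg (by positivity), Nat.cast_ofNat, mul_div_assoc]
    gcongr
    exact_mod_cast hinter a b hab

section PolynomialGraph

variable {R : Type*} [CommRing R] [Fintype R] [DecidableEq R]

def Polynomial.graph (f : R[X]) : Finset (R × R) :=
  univ.image fun x => (x, f.eval x)

theorem Polynomial.card_graph (f : R[X]) : #f.graph = Fintype.card R :=
  card_image_of_injective _ fun _ _ h => (Prod.ext_iff.1 h).1

theorem Polynomial.card_graph_inter_graph_lt [IsDomain R] {f g : R[X]} {m : ℕ}
    (hf : f.degree < m) (hg : g.degree < m) (hfg : f ≠ g) : #(f.graph ∩ g.graph) < m := by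
  have hinter : f.graph ∩ g.graph
      = (univ.filter fun x => f.eval x = g.eval x).image fun x => (x, f.eval x) := by
    ext ⟨x, y⟩
    simp only [graph, mem_inter, mem_image, mem_univ, mem_filter, true_and, Prod.mk.injEq]
    grind
  rw [hinter, card_image_of_injective _ fun _ _ h => (Prod.ext_iff.1 h).1]
  by_contra! hle
  exact hfg (eq_of_degrees_lt_of_eval_finset_eq _ (hf.trans_le (by exact_mod_cast hle))
    (hg.trans_le (by exact_mod_cast hle)) fun x hx => (mem_filter.1 hx).2)

end PolynomialGraph

theorem exists_polynomial_graph_family {R : Type*} [CommRing R] [IsDomain R] [Fintype R]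
    (k d : ℕ) (hd : Fintype.card R ^ 2 ≤ d) :
    ∃ T : (Fin (k + 1) → R) → Finset (Fin d), (∀ a, #(T a) = Fintype.card R) ∧
      ∀ a b, a ≠ b → #(T a ∩ T b) ≤ k := by
  classical
  obtain ⟨e⟩ : Nonempty (R × R ↪ Fin d) :=
    Function.Embedding.nonempty_of_card_le (by simpa [Fintype.card_prod, sq] using hd)
  let poly : (Fin (k + 1) → R) → R[X] := fun a => (degreeLTEquiv R (k + 1)).symm a
  have hpoly : Function.Injective poly :=
    Subtype.val_injective.comp (degreeLTEquiv R (k + 1)).symm.injective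
  have hdeg : ∀ a, (poly a).degree < (k + 1 : ℕ) := fun a =>
    mem_degreeLT.1 ((degreeLTEquiv R (k + 1)).symm a).2
  refine ⟨fun a => (poly a).graph.map e, fun a => by rw [card_map, card_graph], fun a b hab => ?_⟩
  rw [← map_inter, card_map, ← Nat.lt_succ_iff]
  exact card_graph_inter_graph_lt (hdeg a) (hdeg b) (hpoly.ne hab)

theorem exists_nearly_orthogonal_family {R : Type*} [CommRing R] [IsDomain R] [Fintype R]
    (k d : ℕ) (hk : k < Fintype.card R) (hd : Fintype.card R ^ 2 ≤ d) :
    ∃ S : Finset (Matrix (Fin 2) (Fin d) ℝ), #S = Fintype.card R ^ (k + 1) ∧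
      (∀ A ∈ S, ∀ r, ∑ j, A r j ^ 2 = 1) ∧
      ∀ A ∈ S, ∀ B ∈ S, A ≠ B → spec (A * Bᵀ) ≤ 2 * k / Fintype.card R := by
  obtain ⟨T, hcard, hinter⟩ := exists_polynomial_graph_family k d hd
  simpa using exists_nearly_orthogonal_family_of_finsets T hk hcard hinter

theorem exists_prime_sq_le_lt_four_mul_sq {d : ℕ} (hd : 4 ≤ d) :
    ∃ p, p.Prime ∧ p ^ 2 ≤ d ∧ d < 4 * p ^ 2 := by
  set m := Nat.sqrt d
  have hm : 2 ≤ m := Nat.le_sqrt.2 hd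
  obtain ⟨p, hp, hlt, hle⟩ := Nat.exists_prime_lt_and_le_two_mul (m / 2) (by omega)
  refine ⟨p, hp, ?_, ?_⟩
  · calc p ^ 2 ≤ m ^ 2 := Nat.pow_le_pow_left (by omega) 2
      _ ≤ d := sq m ▸ Nat.sqrt_le d
  · calc d < (m + 1) ^ 2 := Nat.lt_succ_sqrt' d
      _ ≤ (2 * p) ^ 2 := Nat.pow_le_pow_left (by omega) 2
      _ = 4 * p ^ 2 := by ring

theorem four_rpow_le_two {e : ℝ} (he : e ≤ 1 / 2) : (4 : ℝ) ^ e ≤ 2 :=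
  calc (4 : ℝ) ^ e ≤ 4 ^ (1 / 2 : ℝ) := rpow_le_rpow_of_exponent_le (by norm_num) he
    _ = 2 := by rw [show (4 : ℝ) = 2 ^ (2 : ℝ) by norm_num, ← rpow_mul zero_le_two]; norm_num

theorem four_mul_sq_rpow {y : ℝ} (hy : 0 ≤ y) (e : ℝ) :
    (4 * y ^ 2) ^ e = 4 ^ e * y ^ (2 * e) := by
  rw [mul_rpow (by norm_num) (sq_nonneg y), ← rpow_natCast_mul hy]; norm_num

theorem rpow_le_two_mul_rpow_two_mul {x y e : ℝ} (hx : 0 ≤ x) (hy : 0 ≤ y)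
    (hxy : x ≤ 4 * y ^ 2) (he0 : 0 ≤ e) (he : e ≤ 1 / 2) : x ^ e ≤ 2 * y ^ (2 * e) :=
  calc x ^ e ≤ (4 * y ^ 2) ^ e := rpow_le_rpow hx hxy he0
    _ = 4 ^ e * y ^ (2 * e) := four_mul_sq_rpow hy e
    _ ≤ 2 * y ^ (2 * e) := by gcongr; exact four_rpow_le_two he

theorem rpow_two_mul_le_two_mul_rpow {x y e : ℝ} (hx : 0 < x) (hy : 0 ≤ y)
    (hxy : x ≤ 4 * y ^ 2) (he0 : e ≤ 0) (he : -(1 / 2) ≤ e) : y ^ (2 * e) ≤ 2 * x ^ e :=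
  calc y ^ (2 * e) = 4 ^ (-e) * (4 * y ^ 2) ^ e := by
        rw [four_mul_sq_rpow hy, ← mul_assoc, ← rpow_add (by norm_num)]; simp
    _ ≤ 2 * x ^ e := mul_le_mul (four_rpow_le_two (by linarith))
        (rpow_le_rpow_of_nonpos hx hxy he0) (by positivity) zero_le_two

theorem two_rpow_half_mul_rpow_le_pow_floor {c x y : ℝ} (hc0 : 0 < c) (hc1 : c < 1 / 2)
    (hx : 0 < x) (hy : 2 ≤ y) (hxy : x ≤ 4 * y ^ 2) :
    (2 : ℝ) ^ (1 / 2 * x ^ c) ≤ y ^ (⌊y ^ (2 * c)⌋₊ + 1) := by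
  have hexp : 1 / 2 * x ^ c ≤ (⌊y ^ (2 * c)⌋₊ + 1 : ℕ) := by
    have := rpow_le_two_mul_rpow_two_mul hx.le (by positivity) hxy hc0.le hc1.le
    have := Nat.lt_floor_add_one (y ^ (2 * c))
    push_cast
    linarith
  calc (2 : ℝ) ^ (1 / 2 * x ^ c) ≤ 2 ^ ((⌊y ^ (2 * c)⌋₊ + 1 : ℕ) : ℝ) :=
        rpow_le_rpow_of_exponent_le one_le_two hexp
    _ = 2 ^ (⌊y ^ (2 * c)⌋₊ + 1) := rpow_natCast _ _
    _ ≤ y ^ (⌊y ^ (2 * c)⌋₊ + 1) := pow_le_pow_left₀ zero_le_two hy _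

theorem two_mul_floor_div_le {c x y : ℝ} (hc0 : 0 < c) (hc1 : c < 1 / 2)
    (hx : 0 < x) (hy : 0 < y) (hxy : x ≤ 4 * y ^ 2) :
    2 * (⌊y ^ (2 * c)⌋₊ : ℝ) / y ≤ 4 * x ^ (c - 1 / 2) :=
  calc 2 * (⌊y ^ (2 * c)⌋₊ : ℝ) / y ≤ 2 * y ^ (2 * c) / y := by
        gcongr; exact Nat.floor_le (by positivity)
    _ = 2 * y ^ (2 * (c - 1 / 2)) := by
        rw [mul_div_assoc, ← rpow_sub_one hy.ne']; ring_nf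
    _ ≤ 2 * (2 * x ^ (c - 1 / 2)) := by
        gcongr
        exact rpow_two_mul_le_two_mul_rpow hx hy.le hxy (by linarith) (by linarith)
    _ = 4 * x ^ (c - 1 / 2) := by ring

theorem stmt7 (c : ℝ) (hc0 : 0 < c) (hc1 : c < 1 / 2) :
    ∃ a b : ℝ, 0 < a ∧ 0 < b ∧
      ∃ D : ℕ, ∀ d : ℕ, D ≤ d →
        ∃ S : Finset (Matrix (Fin 2) (Fin d) ℝ),
          (2 : ℝ) ^ (a * (d : ℝ) ^ c) ≤ S.card ∧
          (∀ A ∈ S, ∀ i : Fin 2, ∑ j, A i j ^ 2 = 1) ∧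
          ∀ A ∈ S, ∀ B ∈ S, A ≠ B →
            spec (A * B.transpose) ≤ b * (d : ℝ) ^ (c - 1 / 2) := by
  refine ⟨1 / 2, 4, by norm_num, by norm_num, 4, fun d hd => ?_⟩
  obtain ⟨p, hp, hpd, hdp⟩ := exists_prime_sq_le_lt_four_mul_sq hd
  have : Fact p.Prime := ⟨hp⟩
  have hp2 : (2 : ℝ) ≤ p := by exact_mod_cast hp.two_le
  have hd0 : (0 : ℝ) < d := by exact_mod_cast (show 0 < d by omega)
  have hdp' : (d : ℝ) ≤ 4 * (p : ℝ) ^ 2 := by exact_mod_cast hdp.le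
  have hk : ⌊(p : ℝ) ^ (2 * c)⌋₊ < p :=
    (Nat.floor_lt (by positivity)).2 (rpow_lt_self_of_one_lt (by linarith) (by linarith))
  obtain ⟨S, hS, hunit, hspec⟩ := exists_nearly_orthogonal_family (R := ZMod p)
    ⌊(p : ℝ) ^ (2 * c)⌋₊ d (by simpa using hk) (by simpa using hpd)
  rw [ZMod.card] at hS hspec
  refine ⟨S, ?_, hunit, fun A hA B hB hAB => (hspec A hA B hB hAB).trans ?_⟩
  · rw [hS, Nat.cast_pow]
    exact two_rpow_half_mul_rpow_le_pow_floor hc0 hc1 hd0 hp2 hdp'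
  · exact two_mul_floor_div_le hc0 hc1 hd0 (by linarith) hdp'
end

section
/- Let p, q be polynomials on ℝ^d, each of degree at most k, such that E_{x∼N^d}[p(x)·r(x)] = 0 and E_{x∼N^d}[q(x)·r(x)] = 0 for every polynomial r of degree at most k−1 (i.e., p and q are harmonic of degree k). Then for every 0 ≤ ℓ ≤ k, E_{x∼N^d}[ ⟨∇^ℓ p(x), ∇^ℓ q(x)⟩ ] = k(k−1)⋯(k−ℓ+1) · E_{x∼N^d}[p(x) q(x)], where ⟨∇^ℓ p(x), ∇^ℓ q(x)⟩ := Σ_{i₁,…,i_ℓ = 1}^d (∂_{i₁}⋯∂_{i_ℓ} p)(x) · (∂_{i₁}⋯∂_{i_ℓ} q)(x). In particular, for ℓ = k the quantity ⟨∇^k p, ∇^k q⟩ is a constant (independent of x) equal to k! · E_{x∼N^d}[p(x) q(x)]. -/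
open MeasureTheory ProbabilityTheory Real Finset

noncomputable def stdGaussian (d : ℕ) : Measure (Fin d → ℝ) :=
  Measure.pi fun _ => gaussianReal 0 1

/-- The iterated partial derivative `∂_{J 0} ⋯ ∂_{J (ℓ-1)} P` of a polynomial `P`. -/
noncomputable def iterDeriv {d : ℕ} {ℓ : ℕ} (J : Fin ℓ → Fin d)
    (P : MvPolynomial (Fin d) ℝ) : MvPolynomial (Fin d) ℝ :=
  (List.ofFn J).foldr (fun i Q => MvPolynomial.pderiv i Q) P

/-!
Gaussian integration by parts, `E[xᵢ f] = E[∂ᵢ f]`, turns the Dirichlet form `∑ᵢ E[∂ᵢA ∂ᵢB]` into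
`E[A · LB]` for the Ornstein–Uhlenbeck operator `L = ∑ᵢ (xᵢ∂ᵢ - ∂ᵢ²)`. By Euler's identity on
homogeneous components, `LB = (n + 1) B` modulo polynomials of degree `≤ n` whenever
`deg B ≤ n + 1`. Integration by parts also shows that `∂ᵢ` maps polynomials orthogonal to all
degrees `< k` to polynomials orthogonal to all degrees `< k - 1`. Hence `∂_J P` is orthogonal to
degrees `< k - ℓ` while `∂_J Q` has degree `≤ k - ℓ`, and each further derivative contributes a
factor `k - ℓ`. For `ℓ = k` both `∂_J P` and `∂_J Q` are constants.
-/

lemma gaussianPDFReal_zero_one_eq :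
    gaussianPDFReal 0 1 = fun x => (√(2 * π))⁻¹ * rexp (-x ^ 2 / 2) := by
  ext x; simp [gaussianPDFReal]

lemma hasDerivAt_gaussianPDFReal_zero_one (x : ℝ) :
    HasDerivAt (gaussianPDFReal 0 1) (-x * gaussianPDFReal 0 1 x) x := by
  have hsq : HasDerivAt (fun y : ℝ => -y ^ 2 / 2) (-x) x :=
    ((hasDerivAt_pow 2 x).neg.div_const 2).congr_deriv (by ring)
  rw [gaussianPDFReal_zero_one_eq]
  exact (hsq.exp.const_mul _).congr_deriv (by ring)

lemma integrable_pow_mul_gaussianPDFReal_zero_one (n : ℕ) :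
    Integrable (fun x : ℝ => x ^ n * gaussianPDFReal 0 1 x) := by
  have h := integrable_rpow_mul_exp_neg_mul_sq (b := 2⁻¹) (by norm_num) (s := n)
    (by linarith [(n.cast_nonneg : (0 : ℝ) ≤ n)])
  refine (h.const_mul (√(2 * π))⁻¹).congr (.of_forall fun x => ?_)
  simp only [gaussianPDFReal_zero_one_eq, Real.rpow_natCast]
  ring_nf

lemma integrable_pow_gaussianReal {μ : ℝ} {v : NNReal} (n : ℕ) :
    Integrable (fun x : ℝ => x ^ n) (gaussianReal μ v) :=
  integrable_pow_of_mem_interior_integrableExpSet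
    (by simp [integrableExpSet_fun_id_gaussianReal]) n

/-- Integrate `x ^ n` by parts against `φ' = -x φ`. -/
lemma integral_pow_succ_gaussianReal (n : ℕ) :
    ∫ x, x ^ (n + 1) ∂gaussianReal 0 1 = n * ∫ x, x ^ (n - 1) ∂gaussianReal 0 1 := by
  simp only [integral_gaussianReal_eq_integral_smul one_ne_zero, smul_eq_mul]
  have ibp := integral_mul_deriv_eq_deriv_mul_of_integrable
    (u := fun x : ℝ => x ^ n) (u' := fun x => n * x ^ (n - 1))
    (v := gaussianPDFReal 0 1) (v' := fun x => -x * gaussianPDFReal 0 1 x)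
    (fun x _ => hasDerivAt_pow n x) (fun x _ => hasDerivAt_gaussianPDFReal_zero_one x)
    ((integrable_pow_mul_gaussianPDFReal_zero_one (n + 1)).neg.congr
      (.of_forall fun x => by simp only [Pi.mul_apply, Pi.neg_apply]; ring))
    (((integrable_pow_mul_gaussianPDFReal_zero_one (n - 1)).const_mul n).congr
      (.of_forall fun x => by simp only [Pi.mul_apply]; ring))
    (integrable_pow_mul_gaussianPDFReal_zero_one n)
  rw [← integral_const_mul]
  calc ∫ x, gaussianPDFReal 0 1 x * x ^ (n + 1)
      = -∫ x, x ^ n * (-x * gaussianPDFReal 0 1 x) := by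
        rw [← integral_neg]; congr 1 with x; ring
    _ = _ := by rw [ibp, neg_neg]; congr 1 with x; ring

lemma Fin.sum_pi_eq_sum_sum_cons {α M : Type*} [Fintype α] [AddCommMonoid M] {n : ℕ}
    (f : (Fin (n + 1) → α) → M) : ∑ J, f J = ∑ J : Fin n → α, ∑ i, f (Fin.cons i J) := by
  rw [← (Fin.consEquiv fun _ => α).sum_comp, Fintype.sum_prod_type_right]
  rfl

namespace MvPolynomial

section Algebra

variable {R σ : Type*} [CommRing R]

lemma totalDegree_pderiv_le (i : σ) (p : MvPolynomial σ R) :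
    (pderiv i p).totalDegree ≤ p.totalDegree - 1 := by
  conv_lhs => rw [← sum_homogeneousComponent p, map_sum]
  refine totalDegree_finsetSum_le fun j hj => ?_
  have := ((homogeneousComponent_isHomogeneous j p).pderiv (i := i)).totalDegree_le
  have := mem_range.mp hj
  omega

variable [Fintype σ]

lemma totalDegree_sum_X_mul_pderiv_sub_le {n : ℕ} {p : MvPolynomial σ R}
    (hp : p.totalDegree ≤ n + 1) :
    (∑ i, X i * pderiv i p - (n + 1) • p).totalDegree ≤ n := by
  have hsplit : ∑ i, X i * pderiv i p - (n + 1) • p = ∑ j ∈ range (p.totalDegree + 1),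
      (j • homogeneousComponent j p - (n + 1) • homogeneousComponent j p) := by
    conv_lhs => rw [← sum_homogeneousComponent p]
    simp_rw [map_sum, mul_sum, smul_sum, sum_sub_distrib]
    rw [sum_comm]
    congr 1
    exact sum_congr rfl fun j _ => (homogeneousComponent_isHomogeneous j p).sum_X_mul_pderiv
  rw [hsplit]
  refine totalDegree_finsetSum_le fun j hj => ?_
  rcases eq_or_ne j (n + 1) with rfl | hjn
  · simp
  have hdeg := (homogeneousComponent_isHomogeneous j p).totalDegree_le
  have hj : j ≤ n := by have := mem_range.mp hj; omega
  refine (totalDegree_sub _ _).trans (max_le ?_ ?_) <;>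
    exact (totalDegree_smul_le _ _).trans (hdeg.trans hj)

noncomputable def ornsteinUhlenbeck (p : MvPolynomial σ R) : MvPolynomial σ R :=
  ∑ i, (X i * pderiv i p - pderiv i (pderiv i p))

lemma totalDegree_ornsteinUhlenbeck_sub_le {n : ℕ} {p : MvPolynomial σ R}
    (hp : p.totalDegree ≤ n + 1) : (ornsteinUhlenbeck p - (n + 1) • p).totalDegree ≤ n := by
  have hsplit : ornsteinUhlenbeck p - (n + 1) • p =
      (∑ i, X i * pderiv i p - (n + 1) • p) - ∑ i, pderiv i (pderiv i p) := by
    rw [ornsteinUhlenbeck, sum_sub_distrib]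
    abel
  rw [hsplit]
  refine (totalDegree_sub _ _).trans (max_le (totalDegree_sum_X_mul_pderiv_sub_le hp) ?_)
  refine totalDegree_finsetSum_le fun i _ => ?_
  have h₁ := totalDegree_pderiv_le i (pderiv i p)
  have h₂ := totalDegree_pderiv_le i p
  omega

end Algebra

section Gaussian

variable {d : ℕ}

instance : IsProbabilityMeasure (stdGaussian d) := by
  unfold _root_.stdGaussian
  infer_instance

lemma eval_monomial_eq_prod (x : Fin d → ℝ) (m : Fin d →₀ ℕ) (c : ℝ) :
    eval x (monomial m c) = c * ∏ i, x i ^ m i := by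
  rw [eval_monomial, Finsupp.prod_fintype _ _ fun _ => pow_zero _]

lemma integrable_eval_stdGaussian (P : MvPolynomial (Fin d) ℝ) :
    Integrable (fun x => eval x P) (stdGaussian d) := by
  induction P using MvPolynomial.induction_on' with
  | monomial m c =>
    simp only [eval_monomial_eq_prod]
    exact (Integrable.fintype_prod fun i => integrable_pow_gaussianReal (m i)).const_mul c
  | add P Q hP hQ => simp only [map_add]; exact hP.add hQ

variable (d) in
noncomputable def gaussExpect : MvPolynomial (Fin d) ℝ →ₗ[ℝ] ℝ where
  toFun P := ∫ x, eval x P ∂stdGaussian d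
  map_add' P Q := by
    simp only [map_add]
    exact integral_add (integrable_eval_stdGaussian P) (integrable_eval_stdGaussian Q)
  map_smul' c P := by
    simp only [smul_eval, RingHom.id_apply, smul_eq_mul]
    exact integral_const_mul c _

lemma gaussExpect_apply (P : MvPolynomial (Fin d) ℝ) :
    gaussExpect d P = ∫ x, eval x P ∂stdGaussian d := rfl

lemma gaussExpect_mul (A B : MvPolynomial (Fin d) ℝ) :
    gaussExpect d (A * B) = ∫ x, eval x A * eval x B ∂stdGaussian d := by
  simp only [gaussExpect_apply, map_mul]

lemma integral_sum_eval_mul_eval {ι : Type*} (s : Finset ι) (A B : ι → MvPolynomial (Fin d) ℝ) :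
    ∫ x, ∑ j ∈ s, eval x (A j) * eval x (B j) ∂stdGaussian d =
      ∑ j ∈ s, gaussExpect d (A j * B j) := by
  rw [integral_finsetSum]
  · simp only [gaussExpect_mul]
  · intro j _
    simpa only [map_mul] using integrable_eval_stdGaussian (A j * B j)

lemma gaussExpect_monomial (m : Fin d →₀ ℕ) (c : ℝ) :
    gaussExpect d (monomial m c) = c * ∏ i, ∫ t, t ^ m i ∂gaussianReal 0 1 := by
  simp only [gaussExpect_apply, eval_monomial_eq_prod, integral_const_mul]
  rw [_root_.stdGaussian, integral_fintype_prod_eq_prod (fun i t => t ^ m i)]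

/-- On monomials this is the one-dimensional moment recursion in coordinate `i`. -/
lemma gaussExpect_X_mul (i : Fin d) (P : MvPolynomial (Fin d) ℝ) :
    gaussExpect d (X i * P) = gaussExpect d (pderiv i P) := by
  induction P using MvPolynomial.induction_on' with
  | monomial m c =>
    rw [X, monomial_mul, one_mul, pderiv_monomial, gaussExpect_monomial, gaussExpect_monomial,
      ← Finset.mul_prod_erase _ _ (mem_univ i), ← Finset.mul_prod_erase _ _ (mem_univ i)]
    have hrest : ∀ j ∈ univ.erase i,
        (Finsupp.single i 1 + m : Fin d →₀ ℕ) j = (m - Finsupp.single i 1 : Fin d →₀ ℕ) j :=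
      fun j hj => by simp [(Finset.ne_of_mem_erase hj).symm]
    rw [Finset.prod_congr rfl fun j hj => by rw [hrest j hj]]
    simp only [Finsupp.add_apply, Finsupp.tsub_apply, Finsupp.single_eq_same, add_comm 1,
      integral_pow_succ_gaussianReal]
    ring
  | add P Q hP hQ => simp only [mul_add, map_add, hP, hQ]

lemma gaussExpect_pderiv_mul (i : Fin d) (A B : MvPolynomial (Fin d) ℝ) :
    gaussExpect d (pderiv i A * B) = gaussExpect d (A * (X i * B - pderiv i B)) := by
  have h := gaussExpect_X_mul i (A * B)
  rw [pderiv_mul, map_add] at h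
  rw [mul_sub, map_sub, mul_left_comm, h]
  ring

lemma gaussExpect_mul_ornsteinUhlenbeck (A B : MvPolynomial (Fin d) ℝ) :
    gaussExpect d (A * ornsteinUhlenbeck B) = ∑ i, gaussExpect d (pderiv i A * pderiv i B) := by
  simp only [gaussExpect_pderiv_mul, ornsteinUhlenbeck, mul_sum, map_sum]

variable (d) in
def IsGaussOrthogonalBelow (k : ℕ) (P : MvPolynomial (Fin d) ℝ) : Prop :=
  ∀ R : MvPolynomial (Fin d) ℝ, R.totalDegree < k → gaussExpect d (P * R) = 0

lemma IsGaussOrthogonalBelow.sum_gaussExpect_pderiv_mul_pderiv {n : ℕ}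
    {A B : MvPolynomial (Fin d) ℝ} (hA : IsGaussOrthogonalBelow d (n + 1) A)
    (hB : B.totalDegree ≤ n + 1) :
    ∑ i, gaussExpect d (pderiv i A * pderiv i B) = (n + 1) * gaussExpect d (A * B) := by
  have hlow := hA _ (Nat.lt_succ_of_le (totalDegree_ornsteinUhlenbeck_sub_le hB))
  rw [mul_sub, map_sub, sub_eq_zero] at hlow
  rw [← gaussExpect_mul_ornsteinUhlenbeck, hlow, mul_smul_comm, map_nsmul, nsmul_eq_mul]
  push_cast
  ring

lemma IsGaussOrthogonalBelow.pderiv {k : ℕ} {A : MvPolynomial (Fin d) ℝ}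
    (hA : IsGaussOrthogonalBelow d k A) (i : Fin d) :
    IsGaussOrthogonalBelow d (k - 1) (pderiv i A) := by
  intro R hR
  rw [gaussExpect_pderiv_mul]
  refine hA _ ((totalDegree_sub _ _).trans_lt (max_lt ?_ ?_))
  · have := totalDegree_mul (X i) R
    rw [totalDegree_X] at this
    omega
  · have := totalDegree_pderiv_le i R
    omega

end Gaussian

section IterDeriv

variable {d : ℕ}

lemma iterDeriv_zero (J : Fin 0 → Fin d) (P : MvPolynomial (Fin d) ℝ) : iterDeriv J P = P := rfl

lemma iterDeriv_cons {ℓ : ℕ} (i : Fin d) (J : Fin ℓ → Fin d) (P : MvPolynomial (Fin d) ℝ) :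
    iterDeriv (Fin.cons i J) P = pderiv i (iterDeriv J P) := by
  simp [iterDeriv, List.ofFn_succ]

lemma totalDegree_iterDeriv_le {ℓ : ℕ} (J : Fin ℓ → Fin d) (P : MvPolynomial (Fin d) ℝ) :
    (iterDeriv J P).totalDegree ≤ P.totalDegree - ℓ := by
  induction ℓ with
  | zero => exact le_rfl
  | succ ℓ ih =>
    rw [← Fin.cons_self_tail J, iterDeriv_cons]
    have := totalDegree_pderiv_le (J 0) (iterDeriv (Fin.tail J) P)
    have := ih (Fin.tail J)
    omega

lemma eval_iterDeriv_eq_of_totalDegree_le {ℓ : ℕ} (J : Fin ℓ → Fin d)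
    {P : MvPolynomial (Fin d) ℝ} (hP : P.totalDegree ≤ ℓ) (x y : Fin d → ℝ) :
    eval x (iterDeriv J P) = eval y (iterDeriv J P) := by
  have h := totalDegree_iterDeriv_le J P
  rw [(totalDegree_eq_zero_iff_eq_C (p := iterDeriv J P)).mp (by omega), eval_C, eval_C]

lemma IsGaussOrthogonalBelow.iterDeriv {k ℓ : ℕ} {P : MvPolynomial (Fin d) ℝ}
    (hP : IsGaussOrthogonalBelow d k P) (J : Fin ℓ → Fin d) :
    IsGaussOrthogonalBelow d (k - ℓ) (iterDeriv J P) := by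
  induction ℓ with
  | zero => exact hP
  | succ ℓ ih =>
    rw [← Fin.cons_self_tail J, iterDeriv_cons, ← Nat.sub_sub]
    exact (ih (Fin.tail J)).pderiv (J 0)

lemma sum_gaussExpect_iterDeriv_mul_iterDeriv {k : ℕ} {P Q : MvPolynomial (Fin d) ℝ}
    (hP : IsGaussOrthogonalBelow d k P) (hQ : Q.totalDegree ≤ k) {ℓ : ℕ} (hℓ : ℓ ≤ k) :
    ∑ J : Fin ℓ → Fin d, gaussExpect d (iterDeriv J P * iterDeriv J Q) =
      k.descFactorial ℓ * gaussExpect d (P * Q) := by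
  induction ℓ with
  | zero => simp [iterDeriv_zero]
  | succ ℓ ih =>
    obtain ⟨n, hn⟩ : ∃ n, k - ℓ = n + 1 := ⟨k - ℓ - 1, by omega⟩
    have step : ∀ J : Fin ℓ → Fin d,
        ∑ i, gaussExpect d (iterDeriv (Fin.cons i J) P * iterDeriv (Fin.cons i J) Q) =
          (n + 1) * gaussExpect d (iterDeriv J P * iterDeriv J Q) := by
      intro J
      simp only [iterDeriv_cons]
      refine IsGaussOrthogonalBelow.sum_gaussExpect_pderiv_mul_pderiv (hn ▸ hP.iterDeriv J) ?_
      have := totalDegree_iterDeriv_le J Q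
      omega
    rw [Fin.sum_pi_eq_sum_sum_cons, Fintype.sum_congr _ _ step, ← mul_sum, ih (by omega),
      Nat.descFactorial_succ, hn]
    push_cast
    ring

end IterDeriv

end MvPolynomial

open MvPolynomial in
theorem stmt10_general (d k : ℕ) (P Q : MvPolynomial (Fin d) ℝ)
    (hPdeg : P.totalDegree ≤ k) (hQdeg : Q.totalDegree ≤ k)
    (hPorth : ∀ R : MvPolynomial (Fin d) ℝ, R.totalDegree < k →
      ∫ x, MvPolynomial.eval x P * MvPolynomial.eval x R ∂stdGaussian d = 0) :
    (∀ ℓ : ℕ, ℓ ≤ k →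
      ∫ x, (∑ J : Fin ℓ → Fin d,
          MvPolynomial.eval x (iterDeriv J P) * MvPolynomial.eval x (iterDeriv J Q))
        ∂stdGaussian d =
      (Nat.descFactorial k ℓ : ℝ) *
        ∫ x, MvPolynomial.eval x P * MvPolynomial.eval x Q ∂stdGaussian d) ∧
    (∀ x : Fin d → ℝ,
      (∑ J : Fin k → Fin d,
          MvPolynomial.eval x (iterDeriv J P) * MvPolynomial.eval x (iterDeriv J Q)) =
      (Nat.factorial k : ℝ) *
        ∫ y, MvPolynomial.eval y P * MvPolynomial.eval y Q ∂stdGaussian d) := by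
  have hP : IsGaussOrthogonalBelow d k P := fun R hR => (gaussExpect_mul P R).trans (hPorth R hR)
  have moments : ∀ ℓ : ℕ, ℓ ≤ k →
      ∫ x, (∑ J : Fin ℓ → Fin d, eval x (iterDeriv J P) * eval x (iterDeriv J Q))
        ∂stdGaussian d = k.descFactorial ℓ * ∫ x, eval x P * eval x Q ∂stdGaussian d :=
    fun ℓ hℓ => by
      rw [integral_sum_eval_mul_eval, sum_gaussExpect_iterDeriv_mul_iterDeriv hP hQdeg hℓ,
        gaussExpect_mul]
  refine ⟨moments, fun x => ?_⟩
  have hconst : ∀ y : Fin d → ℝ,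
      ∑ J : Fin k → Fin d, eval y (iterDeriv J P) * eval y (iterDeriv J Q) =
        ∑ J : Fin k → Fin d, eval x (iterDeriv J P) * eval x (iterDeriv J Q) := fun y =>
    sum_congr rfl fun J _ => by
      rw [eval_iterDeriv_eq_of_totalDegree_le J hPdeg y x,
        eval_iterDeriv_eq_of_totalDegree_le J hQdeg y x]
  rw [← Nat.descFactorial_self, ← moments k le_rfl, integral_congr_ae (.of_forall hconst),
    integral_const, probReal_univ, one_smul]

theorem stmt10 (d k : ℕ) (P Q : MvPolynomial (Fin d) ℝ)
    (hPdeg : P.totalDegree ≤ k) (hQdeg : Q.totalDegree ≤ k)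
    (hPorth : ∀ R : MvPolynomial (Fin d) ℝ, R.totalDegree < k →
      ∫ x, MvPolynomial.eval x P * MvPolynomial.eval x R ∂stdGaussian d = 0)
    (hQorth : ∀ R : MvPolynomial (Fin d) ℝ, R.totalDegree < k →
      ∫ x, MvPolynomial.eval x Q * MvPolynomial.eval x R ∂stdGaussian d = 0) :
    (∀ ℓ : ℕ, ℓ ≤ k →
      ∫ x, (∑ J : Fin ℓ → Fin d,
          MvPolynomial.eval x (iterDeriv J P) * MvPolynomial.eval x (iterDeriv J Q))
        ∂stdGaussian d =
      (Nat.descFactorial k ℓ : ℝ) *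
        ∫ x, MvPolynomial.eval x P * MvPolynomial.eval x Q ∂stdGaussian d) ∧
    (∀ x : Fin d → ℝ,
      (∑ J : Fin k → Fin d,
          MvPolynomial.eval x (iterDeriv J P) * MvPolynomial.eval x (iterDeriv J Q)) =
      (Nat.factorial k : ℝ) *
        ∫ y, MvPolynomial.eval y P * MvPolynomial.eval y Q ∂stdGaussian d) :=
  stmt10_general d k P Q hPdeg hQdeg hPorth
end
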